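/- arXiv:1810.10492 — 2 statements merged into one kernel-verified Lean document; each statement's English description precedes it below -/
import Mathlib

section
/- Let p be a prime, V a 3-dimensional vector space over 𝔽_p, and k an algebraic closure of 𝔽_p. For every function f : Z₁ → k and every line L ∈ Z₁, one has (τ'(τf))(L) = p·f(L) + Σ_{L'∈Z₁} f(L'). Since k has characteristic p, τ'(τf) is the constant function on Z₁ with value Σ_{L'∈Z₁} f(L'). -/
open Module

/-- `Z₁`: the set of lines (1-dimensional linear subspaces) of `V`. -/
abbrev lines (p : ℕ) (V : Type) [AddCommGroup V] [Module (ZMod p) V] : Type :=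
  {L : Submodule (ZMod p) V // finrank (ZMod p) L = 1}

/-- `Z₂`: the set of planes (2-dimensional linear subspaces) of `V`. -/
abbrev planes (p : ℕ) (V : Type) [AddCommGroup V] [Module (ZMod p) V] : Type :=
  {P : Submodule (ZMod p) V // finrank (ZMod p) P = 2}

/-- The map `τ`: `(τ f)(P) = Σ_{L ∈ Z₁, L ⊆ P} f(L)`. -/
noncomputable def tau (p : ℕ) (V : Type) [AddCommGroup V] [Module (ZMod p) V]
    (k : Type) [Field k] (f : lines p V → k) (P : planes p V) : k :=
  ∑ᶠ L ∈ {L : lines p V | L.1 ≤ P.1}, f L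

/-- The map `τ'`: `(τ' f')(L) = Σ_{P ∈ Z₂, L ⊆ P} f'(P)`. -/
noncomputable def tau' (p : ℕ) (V : Type) [AddCommGroup V] [Module (ZMod p) V]
    (k : Type) [Field k] (f' : planes p V → k) (L : lines p V) : k :=
  ∑ᶠ P ∈ {P : planes p V | L.1 ≤ P.1}, f' P

-- auxiliary: number of lines in a 2-dimensional space over ZMod p
theorem aux_card_lines (p : ℕ) [Fact p.Prime] (W : Type) [AddCommGroup W]
    [Module (ZMod p) W] [Module.Finite (ZMod p) W] (h2 : finrank (ZMod p) W = 2) :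
    Nat.card (lines p W) = p + 1 := by
  classical
  have hp := (Fact.out : p.Prime)
  haveI : Finite W := Module.finite_of_finite (ZMod p)
  letI : Fintype W := Fintype.ofFinite W
  letI : Fintype (lines p W) := Fintype.ofFinite _
  set F : {v : W // v ≠ 0} → lines p W :=
    fun v => ⟨Submodule.span (ZMod p) {v.1}, finrank_span_singleton v.2⟩ with hF
  -- each fiber of F has cardinality p - 1
  have hfiber : ∀ ℓ : lines p W,
      (Finset.univ.filter fun v => F v = ℓ).card = p - 1 := by
    intro ℓ
    haveI : Module.Finite (ZMod p) ℓ.1 := inferInstance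
    haveI : Finite ℓ.1 := Module.finite_of_finite (ZMod p)
    letI : Fintype ℓ.1 := Fintype.ofFinite _
    have hcardL : Fintype.card ℓ.1 = p := by
      have := card_eq_pow_finrank (K := ZMod p) (V := ℓ.1)
      rw [ZMod.card, ℓ.2, pow_one] at this
      exact this
    have e : {v : {v : W // v ≠ 0} // F v = ℓ} ≃ {x : ℓ.1 // x ≠ 0} :=
      { toFun := fun v => ⟨⟨v.1.1, by
          have : Submodule.span (ZMod p) {v.1.1} = ℓ.1 := congrArg Subtype.val v.2
          rw [← this]; exact Submodule.mem_span_singleton_self _⟩, by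
          intro h
          exact v.1.2 (by simpa using congrArg Subtype.val h)⟩
        invFun := fun x => ⟨⟨x.1.1, fun h => x.2 (Subtype.ext h)⟩, by
          apply Subtype.ext
          apply Submodule.eq_of_le_of_finrank_eq
          · rw [Submodule.span_le, Set.singleton_subset_iff]; exact x.1.2
          · rw [finrank_span_singleton (fun h => x.2 (Subtype.ext h)), ℓ.2]⟩
        left_inv := fun v => by ext; rfl
        right_inv := fun x => by ext; rfl }
    rw [← Fintype.card_subtype, Fintype.card_congr e]
    have : Fintype.card {x : ℓ.1 // ¬ x = 0} = Fintype.card ℓ.1 - Fintype.card {x : ℓ.1 // x = 0} :=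
      Fintype.card_subtype_compl _
    rw [Fintype.card_subtype_eq (0 : ℓ.1), hcardL] at this
    exact this
  -- total count
  have htot : Fintype.card {v : W // v ≠ 0} = Fintype.card (lines p W) * (p - 1) := by
    rw [← Finset.card_univ,
      Finset.card_eq_sum_card_fiberwise (fun v _ => Finset.mem_univ (F v))]
    simp [hfiber]
  have hW : Fintype.card W = p ^ 2 := by
    have := card_eq_pow_finrank (K := ZMod p) (V := W)
    rw [ZMod.card, h2] at this
    exact this
  have hnz : Fintype.card {v : W // v ≠ 0} = p ^ 2 - 1 := by
    have : Fintype.card {v : W // ¬ v = 0} = Fintype.card W - Fintype.card {v : W // v = 0} :=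
      Fintype.card_subtype_compl _
    rw [Fintype.card_subtype_eq (0 : W), hW] at this
    exact this
  rw [hnz] at htot
  have h2p : 2 ≤ p := hp.two_le
  have hfact : p ^ 2 - 1 = (p + 1) * (p - 1) := by
    cases' Nat.exists_eq_add_of_le h2p with m hm
    subst hm
    have : (2 + m) ^ 2 = (2 + m + 1) * (2 + m - 1) + 1 := by
      have : 2 + m - 1 = m + 1 := by omega
      rw [this]; ring
    omega
  rw [hfact] at htot
  rw [Nat.card_eq_fintype_card]
  exact Nat.eq_of_mul_eq_mul_right (by omega : 0 < p - 1) htot.symm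

theorem aux_finrank_map_mkQ (p : ℕ) [Fact p.Prime] (V : Type) [AddCommGroup V]
    [Module (ZMod p) V] [Module.Finite (ZMod p) V]
    (L P : Submodule (ZMod p) V) (hL : L ≤ P) :
    finrank (ZMod p) P = finrank (ZMod p) (P.map L.mkQ) + finrank (ZMod p) L := by
  set g : P →ₗ[ZMod p] V ⧸ L := L.mkQ ∘ₗ P.subtype with hg
  have hr : LinearMap.range g = P.map L.mkQ := by
    rw [hg, LinearMap.range_comp, Submodule.range_subtype]
  have hk : LinearMap.ker g = L.comap P.subtype := by
    rw [hg, LinearMap.ker_comp, Submodule.ker_mkQ]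
  have h := LinearMap.finrank_range_add_finrank_ker g
  rw [hr, hk, (Submodule.comapSubtypeEquivOfLe hL).finrank_eq] at h
  exact h.symm

noncomputable def auxEquiv (p : ℕ) [Fact p.Prime] (V : Type) [AddCommGroup V]
    [Module (ZMod p) V] [Module.Finite (ZMod p) V] (L : lines p V) :
    {P : planes p V // L.1 ≤ P.1} ≃ lines p (V ⧸ L.1) where
  toFun P := ⟨P.1.1.map L.1.mkQ, by
    have := aux_finrank_map_mkQ p V L.1 P.1.1 P.2
    rw [P.1.2, L.2] at this
    omega⟩
  invFun W := by
    refine ⟨⟨W.1.comap L.1.mkQ, ?_⟩, ?_⟩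
    · have hle : L.1 ≤ W.1.comap L.1.mkQ := by
        intro x hx
        rw [Submodule.mem_comap, Submodule.mkQ_apply,
          Submodule.Quotient.mk_eq_zero _ |>.mpr hx]
        exact W.1.zero_mem
      have hmc : (W.1.comap L.1.mkQ).map L.1.mkQ = W.1 :=
        Submodule.map_comap_eq_of_surjective (Submodule.mkQ_surjective L.1) _
      have := aux_finrank_map_mkQ p V L.1 (W.1.comap L.1.mkQ) hle
      rw [hmc, W.2, L.2] at this
      omega
    · intro x hx
      rw [Submodule.mem_comap, Submodule.mkQ_apply,
        Submodule.Quotient.mk_eq_zero _ |>.mpr hx]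
      exact W.1.zero_mem
  left_inv P := by
    apply Subtype.ext; apply Subtype.ext
    show (P.1.1.map L.1.mkQ).comap L.1.mkQ = P.1.1
    rw [Submodule.comap_map_mkQ, sup_eq_right.mpr P.2]
  right_inv W := by
    apply Subtype.ext
    exact Submodule.map_comap_eq_of_surjective (Submodule.mkQ_surjective L.1) _

theorem aux_finrank_sup (p : ℕ) [Fact p.Prime] (V : Type) [AddCommGroup V]
    [Module (ZMod p) V] [Module.Finite (ZMod p) V] (L L' : Submodule (ZMod p) V)
    (h1 : finrank (ZMod p) L = 1) (h1' : finrank (ZMod p) L' = 1) (hne : L ≠ L') :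
    finrank (ZMod p) ↥(L ⊔ L') = 2 := by
  have hinf : L ⊓ L' = ⊥ := by
    by_contra hbot
    have hfr : finrank (ZMod p) ↥(L ⊓ L') ≠ 0 := by
      intro h0
      exact hbot (Submodule.finrank_eq_zero.mp h0)
    have hle1 : finrank (ZMod p) ↥(L ⊓ L') ≤ 1 := h1 ▸ Submodule.finrank_mono inf_le_left
    have heq : finrank (ZMod p) ↥(L ⊓ L') = 1 := by omega
    have h1eq : L ⊓ L' = L :=
      Submodule.eq_of_le_of_finrank_eq inf_le_left (by rw [heq, h1])
    have h2eq : L ⊓ L' = L' :=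
      Submodule.eq_of_le_of_finrank_eq inf_le_right (by rw [heq, h1'])
    exact hne (h1eq ▸ h2eq)
  have h := Submodule.finrank_sup_add_finrank_inf_eq L L'
  rw [hinf, h1, h1'] at h
  simpa using h

theorem stmt5' (p : ℕ) [Fact p.Prime] (V : Type) [AddCommGroup V] [Module (ZMod p) V]
    [Module.Finite (ZMod p) V] (hV : finrank (ZMod p) V = 3)
    (k : Type) [Field k] [Algebra (ZMod p) k] [IsAlgClosure (ZMod p) k]
    (f : lines p V → k) (L : lines p V) :
    (∑ᶠ P ∈ {P : planes p V | L.1 ≤ P.1}, ∑ᶠ L' ∈ {L' : lines p V | L'.1 ≤ P.1}, f L')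
      = (p : k) * f L + ∑ᶠ L' : lines p V, f L' := by
  classical
  haveI : Finite V := Module.finite_of_finite (ZMod p)
  letI : Fintype (lines p V) := Fintype.ofFinite _
  letI : Fintype (planes p V) := Fintype.ofFinite _
  set A : Finset (planes p V) := Finset.univ.filter (fun P => L.1 ≤ P.1) with hA
  -- convert finsums to finset sums
  have step1 : (∑ᶠ P ∈ {P : planes p V | L.1 ≤ P.1},
        ∑ᶠ L' ∈ {L' : lines p V | L'.1 ≤ P.1}, f L')
      = ∑ P ∈ A, ∑ L' ∈ Finset.univ.filter (fun L' : lines p V => L'.1 ≤ P.1), f L' := by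
    rw [← finsum_mem_coe_finset]
    have : (↑A : Set (planes p V)) = {P : planes p V | L.1 ≤ P.1} := by
      ext P; simp [hA]
    rw [this]
    apply finsum_mem_congr rfl
    intro P _
    rw [← finsum_mem_coe_finset]
    congr 1
    ext L'; simp
  rw [step1]
  -- swap the sums
  have step2 : ∀ P ∈ A, (∑ L' ∈ Finset.univ.filter (fun L' : lines p V => L'.1 ≤ P.1), f L')
      = ∑ L' : lines p V, if L'.1 ≤ P.1 then f L' else 0 := by
    intro P _; rw [Finset.sum_filter]
  rw [Finset.sum_congr rfl step2, Finset.sum_comm]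
  -- compute the inner sums
  have hcard : ∀ L' : lines p V,
      (A.filter fun P => L'.1 ≤ P.1).card = if L' = L then p + 1 else 1 := by
    intro L'
    by_cases h : L' = L
    · subst h
      rw [if_pos rfl, Finset.filter_true_of_mem (fun P hP => by
        simpa [hA] using hP)]
      have : A.card = Nat.card {P : planes p V // L'.1 ≤ P.1} := by
        rw [Nat.card_eq_fintype_card, Fintype.card_subtype]
      rw [this, Nat.card_congr (auxEquiv p V L')]
      apply aux_card_lines
      have := Submodule.finrank_quotient_add_finrank L'.1
      rw [hV, L'.2] at this
      omega
    · rw [if_neg h]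
      have hne : L'.1 ≠ L.1 := fun hh => h (Subtype.ext hh)
      have hsup : finrank (ZMod p) ↥(L.1 ⊔ L'.1) = 2 :=
        aux_finrank_sup p V L.1 L'.1 L.2 L'.2 (Ne.symm hne)
      rw [Finset.card_eq_one]
      refine ⟨⟨L.1 ⊔ L'.1, hsup⟩, ?_⟩
      ext P
      simp only [Finset.mem_filter, Finset.mem_singleton, hA, Finset.mem_univ, true_and]
      constructor
      · rintro ⟨hLP, hL'P⟩
        apply Subtype.ext
        exact (Submodule.eq_of_le_of_finrank_eq (sup_le hLP hL'P) (by rw [hsup, P.2])).symm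
      · rintro rfl
        exact ⟨le_sup_left, le_sup_right⟩
  have step3 : ∀ L' : lines p V,
      (∑ P ∈ A, if L'.1 ≤ P.1 then f L' else 0)
        = (if L' = L then (p : ℕ) + 1 else 1) • f L' := by
    intro L'
    rw [← Finset.sum_filter, Finset.sum_const, hcard L']
  rw [Finset.sum_congr rfl (fun L' _ => step3 L')]
  have step4 : ∀ L' : lines p V,
      (if L' = L then (p : ℕ) + 1 else 1) • f L'
        = f L' + (if L' = L then (p : ℕ) • f L' else 0) := by
    intro L'
    by_cases h : L' = L
    · rw [if_pos h, if_pos h, succ_nsmul, add_comm]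
    · rw [if_neg h, if_neg h, one_smul, add_zero]
  rw [Finset.sum_congr rfl (fun L' _ => step4 L'), Finset.sum_add_distrib,
    Finset.sum_ite_eq' Finset.univ L (fun L' => (p : ℕ) • f L'), if_pos (Finset.mem_univ L),
    finsum_eq_sum_of_fintype, nsmul_eq_mul]
  exact add_comm _ _

/-- For every `f : Z₁ → k` and `L ∈ Z₁`: `(τ'(τ f))(L) = p·f(L) + Σ_{L' ∈ Z₁} f(L')`; since
`k` has characteristic `p`, `τ'(τ f)` is the constant function with value `Σ_{L' ∈ Z₁} f(L')`. -/
theorem stmt5 (p : ℕ) [Fact p.Prime] (V : Type) [AddCommGroup V] [Module (ZMod p) V]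
    [Module.Finite (ZMod p) V] (hV : finrank (ZMod p) V = 3)
    (k : Type) [Field k] [Algebra (ZMod p) k] [IsAlgClosure (ZMod p) k]
    (f : lines p V → k) :
    (∀ L : lines p V,
      tau' p V k (tau p V k f) L = (p : k) * f L + ∑ᶠ L' : lines p V, f L') ∧
    tau' p V k (tau p V k f) = fun _ : lines p V => ∑ᶠ L' : lines p V, f L' := by
  have hmain : ∀ L : lines p V,
      tau' p V k (tau p V k f) L = (p : k) * f L + ∑ᶠ L' : lines p V, f L' := by
    intro L
    simp only [tau', tau]
    exact stmt5' p V hV k f L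
  refine ⟨hmain, ?_⟩
  have hchar : (p : k) = 0 := by
    calc (p : k) = algebraMap (ZMod p) k ((p : ℕ) : ZMod p) := (map_natCast _ p).symm
    _ = 0 := by rw [ZMod.natCast_self, map_zero]
  funext L
  rw [hmain L, hchar, zero_mul, zero_add]
end

section
/- Define rational polynomials π_∅(t) = 1, π₁(t) = t(t+1)(t+2)(t+3)(2t+3)/120, π₂(t) = t(t+1)(2t+1)(3t+1)(3t+2)/120, π₁₂₁(t) = t(t−1)(t+1)(t−3)(t+3)/30, π₂₁₂(t) = t(t−1)(t+1)(3t−1)(3t+1)/30, π₁₂₁₂₁(t) = t(t−1)(t−2)(t−3)(2t−3)/120, π₂₁₂₁₂(t) = t(t−1)(2t−1)(3t−1)(3t−2)/120, π₁₂₁₂₁₂(t) = t⁶. Then for every nonzero rational number t: t⁶·π_∅(1/t) = π₁₂₁₂₁₂(t), t⁶·π₁(1/t) = π₂(t), t⁶·π₁₂₁(1/t) = π₂₁₂(t), and t⁶·π₁₂₁₂₁(1/t) = π₂₁₂₁₂(t). -/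
/-- `π_∅(t) = 1` -/
def piE (_ : ℚ) : ℚ := 1
/-- `π₁(t) = t(t+1)(t+2)(t+3)(2t+3)/120` -/
def pi1 (t : ℚ) : ℚ := t * (t + 1) * (t + 2) * (t + 3) * (2 * t + 3) / 120
/-- `π₂(t) = t(t+1)(2t+1)(3t+1)(3t+2)/120` -/
def pi2 (t : ℚ) : ℚ := t * (t + 1) * (2 * t + 1) * (3 * t + 1) * (3 * t + 2) / 120
/-- `π₁₂₁(t) = t(t−1)(t+1)(t−3)(t+3)/30` -/
def pi121 (t : ℚ) : ℚ := t * (t - 1) * (t + 1) * (t - 3) * (t + 3) / 30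
/-- `π₂₁₂(t) = t(t−1)(t+1)(3t−1)(3t+1)/30` -/
def pi212 (t : ℚ) : ℚ := t * (t - 1) * (t + 1) * (3 * t - 1) * (3 * t + 1) / 30
/-- `π₁₂₁₂₁(t) = t(t−1)(t−2)(t−3)(2t−3)/120` -/
def pi12121 (t : ℚ) : ℚ := t * (t - 1) * (t - 2) * (t - 3) * (2 * t - 3) / 120
/-- `π₂₁₂₁₂(t) = t(t−1)(2t−1)(3t−1)(3t−2)/120` -/
def pi21212 (t : ℚ) : ℚ := t * (t - 1) * (2 * t - 1) * (3 * t - 1) * (3 * t - 2) / 120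
/-- `π₁₂₁₂₁₂(t) = t⁶` -/
def pi121212 (t : ℚ) : ℚ := t ^ 6

/-- The duality `t⁶·π_w(1/t) = π_{w̃}(t)` for the dimension polynomials of the `M_w`
in type `G₂`, with `∅ ↔ 121212`, `1 ↔ 2`, `121 ↔ 212`, `12121 ↔ 21212`. -/
theorem stmt12 : ∀ t : ℚ, t ≠ 0 →
    t ^ 6 * piE (1 / t) = pi121212 t ∧
    t ^ 6 * pi1 (1 / t) = pi2 t ∧
    t ^ 6 * pi121 (1 / t) = pi212 t ∧
    t ^ 6 * pi12121 (1 / t) = pi21212 t := by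
  intro t ht
  unfold piE pi1 pi2 pi121 pi212 pi12121 pi21212 pi121212
  refine ⟨by ring, ?_, ?_, ?_⟩ <;> field_simp <;> ring
end
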